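/- arXiv:2310.04328 — 2 statements merged into one kernel-verified Lean document; each statement's English description precedes it below -/
import Mathlib

section
/- Let c₁, ..., cₙ (n ≥ 2) be independent real random variables, each symmetric about 0. Suppose the first n_l of them are almost surely equal to 0 (variance 0) and the remaining n_h = n − n_l have continuous distributions with P(c_i > 0) = P(c_i < 0) = 1/2. Then for any index l ≤ n_l and any index h > n_l: P(c_l = min_j c_j, breaking ties uniformly among the zero coordinates) = (1/n_l)·(1/2)^{n_h}, while P(c_h = min_j c_j) = (1/n_h)·(1 − (1/2)^{n_h}). Consequently, whenever n > 2, P(c_h is the minimizer) > P(c_l is the minimizer). -/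
open MeasureTheory ProbabilityTheory ENNReal

section Aux

variable {Ω : Type*} [MeasurableSpace Ω] (P : Measure Ω) [IsProbabilityMeasure P]

/-- The joint law of the high-variance subfamily is the product of the marginals. -/
lemma stmt4_joint_law (nl nh : ℕ) (c : (Fin nl ⊕ Fin nh) → Ω → ℝ)
    (hmeas : ∀ j, Measurable (c j))
    (hindep : iIndepFun c P) :
    Measure.pi (fun i : Fin nh => Measure.map (c (Sum.inr i)) P)
      = Measure.map (fun ω (i : Fin nh) => c (Sum.inr i) ω) P := by
  classical
  haveI : ∀ i : Fin nh, IsProbabilityMeasure (Measure.map (c (Sum.inr i)) P) :=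
    fun i => Measure.isProbabilityMeasure_map (hmeas _).aemeasurable
  refine Measure.pi_eq fun s hs => ?_
  have hjm : Measurable (fun ω (i : Fin nh) => c (Sum.inr i) ω) :=
    measurable_pi_lambda _ fun i => hmeas _
  rw [Measure.map_apply hjm (MeasurableSet.univ_pi hs)]
  have hpre : (fun ω (i : Fin nh) => c (Sum.inr i) ω) ⁻¹' (Set.univ.pi s)
      = ⋂ i, c (Sum.inr i) ⁻¹' s i := by
    ext ω; simp [Set.mem_pi]
  rw [hpre]
  set emb : Fin nh ↪ (Fin nl ⊕ Fin nh) := ⟨Sum.inr, Sum.inr_injective⟩ with hemb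
  set S : Finset (Fin nl ⊕ Fin nh) := Finset.univ.map emb with hS
  set f' : (Fin nl ⊕ Fin nh) → Set Ω :=
    Sum.elim (fun _ => Set.univ) (fun i => c (Sum.inr i) ⁻¹' s i) with hf'
  have hbi : (⋂ i, c (Sum.inr i) ⁻¹' s i) = ⋂ j ∈ S, f' j := by
    ext ω
    simp only [Set.mem_iInter]
    constructor
    · intro h j hj
      obtain ⟨i, _, rfl⟩ := Finset.mem_map.mp hj
      exact h i
    · intro h i
      exact h (Sum.inr i) (Finset.mem_map.mpr ⟨i, Finset.mem_univ i, rfl⟩)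
  have hmeas' : ∀ j ∈ S, MeasurableSet[(inferInstance : MeasurableSpace ℝ).comap (c j)] (f' j) := by
    intro j hj
    obtain ⟨i, _, rfl⟩ := Finset.mem_map.mp hj
    exact ⟨s i, hs i, rfl⟩
  rw [hbi, hindep.meas_biInter hmeas', hS, Finset.prod_map]
  refine Finset.prod_congr rfl fun i _ => ?_
  rw [Measure.map_apply (hmeas _) (hs i)]
  rfl

end Aux

/-- The key arithmetic inequality. -/
lemma stmt4_arith (nl nh : ℕ) (hnl : 1 ≤ nl) (hnh : 1 ≤ nh) (hsum : 2 < nl + nh) :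
    (1 / nl : ℝ) * (1 / 2 : ℝ) ^ nh < (1 / nh : ℝ) * (1 - (1 / 2 : ℝ) ^ nh) := by
  have key : (nl : ℝ) + nh < nl * 2 ^ nh := by
    have : nl + nh < nl * 2 ^ nh := by
      rcases Nat.lt_or_ge nl 2 with h | h
      · interval_cases nl
        · -- nl = 1, nh ≥ 2
          have hnh2 : 2 ≤ nh := by omega
          have : nh + 1 < 2 ^ nh := by
            have hp : nh - 1 < 2 ^ (nh - 1) := Nat.lt_two_pow_self
            have he : 2 ^ nh = 2 * 2 ^ (nh - 1) := by
              conv_lhs => rw [show nh = (nh-1)+1 by omega]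
              rw [pow_succ]; ring
            omega
          omega
      · have h1 : nh + 1 ≤ 2 ^ nh := Nat.lt_two_pow_self
        have : nl * (nh + 1) ≤ nl * 2 ^ nh := Nat.mul_le_mul_left nl h1
        have : nl + nh < nl * (nh + 1) := by nlinarith
        omega
    exact_mod_cast by exact_mod_cast this
  have h2 : (0:ℝ) < 2 ^ nh := by positivity
  have hnl' : (0:ℝ) < nl := by exact_mod_cast hnl
  have hnh' : (0:ℝ) < nh := by exact_mod_cast hnh
  rw [div_pow, one_pow, ← sub_pos]
  have heq : (1 / nh : ℝ) * (1 - 1 / 2 ^ nh) - 1 / nl * (1 / 2 ^ nh)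
      = (nl * 2 ^ nh - (nl + nh)) / (nl * nh * 2 ^ nh) := by
    field_simp
    ring
  rw [heq]
  exact div_pos (by linarith) (by positivity)

/-- Theorem 1 of the paper, limit σ_l² → 0: with `n_l` zero (low-variance)
coordinates and `n_h` independent, identically distributed, continuous coordinates that are
positive/negative each with probability 1/2, the probability (with ties among the zero
coordinates broken uniformly) that a given zero coordinate is the minimizer is
`(1/n_l)·(1/2)^{n_h}`, the probability that a given high-variance coordinate is the
minimizer is `(1/n_h)·(1 − (1/2)^{n_h})`, and the latter is larger whenever `n > 2`. -/
theorem stmt_4 {Ω : Type*} [MeasurableSpace Ω] (P : Measure Ω) [IsProbabilityMeasure P]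
    (nl nh : ℕ) (hnl : 1 ≤ nl) (hnh : 1 ≤ nh)
    (c : (Fin nl ⊕ Fin nh) → Ω → ℝ)
    (hmeas : ∀ j, Measurable (c j))
    (hindep : iIndepFun c P)
    -- low-variance coordinates are almost surely 0
    (hlow : ∀ l : Fin nl, ∀ᵐ ω ∂P, c (Sum.inl l) ω = 0)
    -- high-variance coordinates: symmetric about 0 with no atom at 0
    (hpos : ∀ h : Fin nh, P {ω | 0 < c (Sum.inr h) ω} = 1/2)
    (hneg : ∀ h : Fin nh, P {ω | c (Sum.inr h) ω < 0} = 1/2)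
    -- high-variance coordinates are identically distributed (exchangeability)
    (hident : ∀ h h' : Fin nh,
      Measure.map (c (Sum.inr h)) P = Measure.map (c (Sum.inr h')) P)
    -- continuity: no ties among distinct high-variance coordinates
    (hnoties : ∀ h h' : Fin nh, h ≠ h' →
      P {ω | c (Sum.inr h) ω = c (Sum.inr h') ω} = 0) :
    -- probability a given zero coordinate is the minimizer (uniform tie-breaking)
    (∀ _l : Fin nl,
      (nl : ℝ)⁻¹ * (P {ω | ∀ h : Fin nh, 0 < c (Sum.inr h) ω}).toReal =
        (1 / nl) * (1 / 2 : ℝ) ^ nh) ∧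
    -- probability a given high-variance coordinate is the (unique) minimizer
    (∀ h : Fin nh,
      (P {ω | c (Sum.inr h) ω < 0 ∧
          ∀ h' : Fin nh, h' ≠ h → c (Sum.inr h) ω < c (Sum.inr h') ω}).toReal =
        (1 / nh) * (1 - (1 / 2 : ℝ) ^ nh)) ∧
    -- whenever n = n_l + n_h > 2 the high-variance decision is more likely optimal
    (2 < nl + nh →
      (nl : ℝ)⁻¹ * (P {ω | ∀ h : Fin nh, 0 < c (Sum.inr h) ω}).toReal <
        (P {ω | c (Sum.inr ⟨0, hnh⟩) ω < 0 ∧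
          ∀ h' : Fin nh, h' ≠ ⟨0, hnh⟩ →
            c (Sum.inr ⟨0, hnh⟩) ω < c (Sum.inr h') ω}).toReal) := by
  classical
  haveI : ∀ i : Fin nh, IsProbabilityMeasure (Measure.map (c (Sum.inr i)) P) :=
    fun i => Measure.isProbabilityMeasure_map (hmeas _).aemeasurable
  have hjm : Measurable (fun ω (i : Fin nh) => c (Sum.inr i) ω) :=
    measurable_pi_lambda _ fun i => hmeas _
  have hmap := stmt4_joint_law P nl nh c hmeas hindep
  set ν : Measure (Fin nh → ℝ) :=
    Measure.pi (fun i : Fin nh => Measure.map (c (Sum.inr i)) P) with hν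
  have hbridge : ∀ S : Set (Fin nh → ℝ), MeasurableSet S →
      P ((fun ω (i : Fin nh) => c (Sum.inr i) ω) ⁻¹' S) = ν S := by
    intro S hS
    rw [hmap, Measure.map_apply hjm hS]
  -- Part A: the all-positive event
  have hApre : {ω | ∀ h : Fin nh, 0 < c (Sum.inr h) ω}
      = (fun ω (i : Fin nh) => c (Sum.inr i) ω) ⁻¹' (Set.univ.pi fun _ => Set.Ioi 0) := by
    ext ω; simp [Set.mem_pi]
  have hAmS : MeasurableSet (Set.univ.pi fun _ : Fin nh => (Set.Ioi (0:ℝ))) :=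
    MeasurableSet.univ_pi fun _ => measurableSet_Ioi
  have hAval : P {ω | ∀ h : Fin nh, 0 < c (Sum.inr h) ω} = (1/2 : ℝ≥0∞) ^ nh := by
    rw [hApre, hbridge _ hAmS, hν, Measure.pi_pi]
    have hmval : ∀ i : Fin nh, Measure.map (c (Sum.inr i)) P (Set.Ioi 0) = 1/2 := by
      intro i
      rw [Measure.map_apply (hmeas _) measurableSet_Ioi]
      exact hpos i
    rw [Finset.prod_congr rfl fun i _ => hmval i, Finset.prod_const, Finset.card_univ,
      Fintype.card_fin]
  have hAtoReal : (P {ω | ∀ h : Fin nh, 0 < c (Sum.inr h) ω}).toReal = (1/2 : ℝ) ^ nh := by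
    rw [hAval]
    simp [ENNReal.toReal_pow]
  have goal1 : (nl : ℝ)⁻¹ * (P {ω | ∀ h : Fin nh, 0 < c (Sum.inr h) ω}).toReal =
      (1 / nl) * (1 / 2 : ℝ) ^ nh := by
    rw [hAtoReal]; norm_num
  -- Part B
  -- the minimizer sets in the product space
  set SS : Fin nh → Set (Fin nh → ℝ) :=
    fun h => {x | x h < 0 ∧ ∀ h' : Fin nh, h' ≠ h → x h < x h'} with hSS
  have hSSm : ∀ h, MeasurableSet (SS h) := by
    intro h
    have : SS h = {x : Fin nh → ℝ | x h < 0}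
        ∩ ⋂ h', ⋂ (_ : h' ≠ h), {x : Fin nh → ℝ | x h < x h'} := by
      ext x; simp [hSS]
    rw [this]
    exact (measurableSet_lt (measurable_pi_apply h) measurable_const).inter
      (MeasurableSet.iInter fun h' => MeasurableSet.iInter fun _ =>
        measurableSet_lt (measurable_pi_apply h) (measurable_pi_apply h'))
  have hEpre : ∀ h : Fin nh,
      {ω | c (Sum.inr h) ω < 0 ∧ ∀ h' : Fin nh, h' ≠ h → c (Sum.inr h) ω < c (Sum.inr h') ω}
        = (fun ω (i : Fin nh) => c (Sum.inr i) ω) ⁻¹' SS h := by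
    intro h; rfl
  -- exchangeability: all the SS h have the same ν-measure
  have hswap : ∀ h h' : Fin nh, ν (SS h) = ν (SS h') := by
    intro h h'
    rcases eq_or_ne h h' with rfl | hhh
    · rfl
    set e : Fin nh ≃ Fin nh := Equiv.swap h h' with he
    set T := MeasurableEquiv.piCongrLeft (fun _ : Fin nh => ℝ) e with hT
    have hpiperm : (Measure.pi fun i : Fin nh => Measure.map (c (Sum.inr (e i))) P) = ν :=
      congrArg Measure.pi (funext fun i => hident (e i) i)
    have hMP : MeasurePreserving T ν ν := by
      have := MeasureTheory.measurePreserving_piCongrLeft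
        (fun i : Fin nh => Measure.map (c (Sum.inr i)) P) e
      rwa [hpiperm] at this
    have hTapp : ∀ (x : Fin nh → ℝ) (b : Fin nh), T x b = x (e.symm b) := by
      intro x b
      have := MeasurableEquiv.piCongrLeft_apply_apply (β := fun _ : Fin nh => ℝ) e x (e.symm b)
      rwa [Equiv.apply_symm_apply] at this
    have hTpre : T ⁻¹' SS h' = SS h := by
      ext x
      simp only [Set.mem_preimage, hSS, Set.mem_setOf_eq, hTapp]
      have hsymm : e.symm = e := by rw [he, Equiv.symm_swap]
      rw [hsymm]
      have heh' : e h' = h := by rw [he]; exact Equiv.swap_apply_right h h'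
      have heh : e h = h' := by rw [he]; exact Equiv.swap_apply_left h h'
      rw [heh']
      constructor
      · rintro ⟨h1, h2⟩
        refine ⟨h1, fun k hk => ?_⟩
        have hek : e k ≠ h' := by
          intro hc
          apply hk
          have := congrArg e hc
          rwa [Equiv.swap_apply_self, heh'] at this
        have := h2 (e k) hek
        rwa [he, Equiv.swap_apply_self] at this
      · rintro ⟨h1, h2⟩
        refine ⟨h1, fun k hk => ?_⟩
        refine h2 (e k) ?_
        intro hc
        apply hk
        have := congrArg e hc
        rwa [Equiv.swap_apply_self, heh] at this
    calc ν (SS h) = ν (T ⁻¹' SS h') := by rw [hTpre]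
      _ = ν (SS h') := hMP.measure_preimage (hSSm h').nullMeasurableSet
  have hEm : ∀ h, MeasurableSet ((fun ω (i : Fin nh) => c (Sum.inr i) ω) ⁻¹' SS h) :=
    fun h => hjm (hSSm h)
  have hAm' : MeasurableSet {ω | ∀ h : Fin nh, 0 < c (Sum.inr h) ω} := by
    rw [hApre]; exact hjm hAmS
  have hdisjE : Pairwise (Function.onFun Disjoint
      (fun h => (fun ω (i : Fin nh) => c (Sum.inr i) ω) ⁻¹' SS h)) := by
    intro a b hab
    refine Set.disjoint_left.mpr fun ω ha hb => ?_
    simp only [Set.mem_preimage, hSS, Set.mem_setOf_eq] at ha hb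
    have h1 : c (Sum.inr a) ω < c (Sum.inr b) ω := ha.2 b (Ne.symm hab)
    have h2 : c (Sum.inr b) ω < c (Sum.inr a) ω := hb.2 a hab
    exact absurd h2 (lt_asymm h1)
  -- zero coordinates are null
  have hzero : ∀ i : Fin nh, P {ω | c (Sum.inr i) ω = 0} = 0 := by
    intro i
    have hm1 : MeasurableSet {ω | 0 < c (Sum.inr i) ω} :=
      measurableSet_lt measurable_const (hmeas _)
    have hm2 : MeasurableSet {ω | c (Sum.inr i) ω < 0} :=
      measurableSet_lt (hmeas _) measurable_const
    have hd : Disjoint {ω | 0 < c (Sum.inr i) ω} {ω | c (Sum.inr i) ω < 0} :=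
      Set.disjoint_left.mpr fun ω (h1 : 0 < c (Sum.inr i) ω) (h2 : c (Sum.inr i) ω < 0) =>
        absurd h1 (lt_asymm h2)
    have hu : P ({ω | 0 < c (Sum.inr i) ω} ∪ {ω | c (Sum.inr i) ω < 0}) = 1 := by
      rw [measure_union hd hm2, hpos i, hneg i]
      rw [ENNReal.div_add_div_same]
      norm_num
      exact ENNReal.div_self (by norm_num) (by norm_num)
    have hcomp : {ω | c (Sum.inr i) ω = 0}
        = ({ω | 0 < c (Sum.inr i) ω} ∪ {ω | c (Sum.inr i) ω < 0})ᶜ := by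
      ext ω
      simp [not_or, not_lt, le_antisymm_iff]
    rw [hcomp, measure_compl (hm1.union hm2) (measure_ne_top _ _), hu, measure_univ]
    simp
  -- the bad (null) tie/zero set
  set B : Set Ω := (⋃ i : Fin nh, {ω | c (Sum.inr i) ω = 0})
      ∪ ⋃ i : Fin nh, ⋃ j : Fin nh, ⋃ (_ : i ≠ j), {ω | c (Sum.inr i) ω = c (Sum.inr j) ω}
    with hB
  have hB0 : P B = 0 :=
    measure_union_null (measure_iUnion_null fun i => hzero i)
      (measure_iUnion_null fun i => measure_iUnion_null fun j =>
        measure_iUnion_null fun hij => hnoties i j hij)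
  have hcover : ∀ ω, ω ∉ B →
      ω ∈ (⋃ k : Fin nh, (fun ω (i : Fin nh) => c (Sum.inr i) ω) ⁻¹' SS k)
        ∪ {ω | ∀ h : Fin nh, 0 < c (Sum.inr h) ω} := by
    intro ω hωB
    rw [hB] at hωB
    by_cases hall : ∀ h : Fin nh, 0 < c (Sum.inr h) ω
    · exact Set.mem_union_right _ hall
    · push_neg at hall
      obtain ⟨h1, hh1⟩ := hall
      have hne0 : ∀ i : Fin nh, c (Sum.inr i) ω ≠ 0 := fun i hc =>
        hωB (Set.mem_union_left _ (Set.mem_iUnion.mpr ⟨i, hc⟩))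
      have hneq : ∀ i j : Fin nh, i ≠ j → c (Sum.inr i) ω ≠ c (Sum.inr j) ω :=
        fun i j hij hc => hωB (Set.mem_union_right _
          (Set.mem_iUnion.mpr ⟨i, Set.mem_iUnion.mpr ⟨j, Set.mem_iUnion.mpr ⟨hij, hc⟩⟩⟩))
      have hneg1 : c (Sum.inr h1) ω < 0 := lt_of_le_of_ne hh1 (hne0 h1)
      obtain ⟨h0, -, hmin⟩ := Finset.exists_min_image Finset.univ
        (fun k => c (Sum.inr k) ω) ⟨h1, Finset.mem_univ h1⟩
      refine Set.mem_union_left _ (Set.mem_iUnion.mpr ⟨h0, ?_⟩)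
      show c (Sum.inr h0) ω < 0 ∧
        ∀ h' : Fin nh, h' ≠ h0 → c (Sum.inr h0) ω < c (Sum.inr h') ω
      refine ⟨lt_of_le_of_lt (hmin h1 (Finset.mem_univ h1)) hneg1, fun k hk => ?_⟩
      exact lt_of_le_of_ne (hmin k (Finset.mem_univ k)) (hneq h0 k (Ne.symm hk))
  have hXm : MeasurableSet ((⋃ k : Fin nh, (fun ω (i : Fin nh) => c (Sum.inr i) ω) ⁻¹' SS k)
      ∪ {ω | ∀ h : Fin nh, 0 < c (Sum.inr h) ω}) :=
    (MeasurableSet.iUnion hEm).union hAm'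
  have hXfull : P ((⋃ k : Fin nh, (fun ω (i : Fin nh) => c (Sum.inr i) ω) ⁻¹' SS k)
      ∪ {ω | ∀ h : Fin nh, 0 < c (Sum.inr h) ω}) = 1 := by
    have hsub : ((⋃ k : Fin nh, (fun ω (i : Fin nh) => c (Sum.inr i) ω) ⁻¹' SS k)
        ∪ {ω | ∀ h : Fin nh, 0 < c (Sum.inr h) ω})ᶜ ⊆ B := fun ω hω => by
      by_contra hB'
      exact hω (hcover ω hB')
    have h0 : P (((⋃ k : Fin nh, (fun ω (i : Fin nh) => c (Sum.inr i) ω) ⁻¹' SS k)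
        ∪ {ω | ∀ h : Fin nh, 0 < c (Sum.inr h) ω})ᶜ) = 0 := measure_mono_null hsub hB0
    have htot := measure_add_measure_compl (μ := P) hXm
    rw [h0, add_zero, measure_univ] at htot
    exact htot
  have hdisjXA : Disjoint (⋃ k : Fin nh, (fun ω (i : Fin nh) => c (Sum.inr i) ω) ⁻¹' SS k)
      {ω | ∀ h : Fin nh, 0 < c (Sum.inr h) ω} := by
    refine Set.disjoint_left.mpr fun ω hω hA => ?_
    obtain ⟨k, hk⟩ := Set.mem_iUnion.mp hω
    simp only [Set.mem_preimage, hSS, Set.mem_setOf_eq] at hk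
    exact absurd (hA k) (not_lt.mpr (le_of_lt hk.1))
  have hsplit : P (⋃ k : Fin nh, (fun ω (i : Fin nh) => c (Sum.inr i) ω) ⁻¹' SS k)
      + P {ω | ∀ h : Fin nh, 0 < c (Sum.inr h) ω} = 1 := by
    rw [← measure_union hdisjXA hAm']
    exact hXfull
  have goal2 : ∀ h : Fin nh,
      (P {ω | c (Sum.inr h) ω < 0 ∧
          ∀ h' : Fin nh, h' ≠ h → c (Sum.inr h) ω < c (Sum.inr h') ω}).toReal =
        (1 / nh) * (1 - (1 / 2 : ℝ) ^ nh) := by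
    intro h
    have hUeq : P (⋃ k : Fin nh, (fun ω (i : Fin nh) => c (Sum.inr i) ω) ⁻¹' SS k)
        = (nh : ℝ≥0∞) * P ((fun ω (i : Fin nh) => c (Sum.inr i) ω) ⁻¹' SS h) := by
      rw [measure_iUnion hdisjE hEm, tsum_fintype]
      have heach : ∀ k, P ((fun ω (i : Fin nh) => c (Sum.inr i) ω) ⁻¹' SS k)
          = P ((fun ω (i : Fin nh) => c (Sum.inr i) ω) ⁻¹' SS h) := fun k => by
        rw [hbridge _ (hSSm k), hbridge _ (hSSm h), hswap k h]
      rw [Finset.sum_congr rfl fun k _ => heach k, Finset.sum_const, Finset.card_univ,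
        Fintype.card_fin, nsmul_eq_mul]
    have hkey : (nh : ℝ≥0∞) * P ((fun ω (i : Fin nh) => c (Sum.inr i) ω) ⁻¹' SS h)
        + (1/2 : ℝ≥0∞) ^ nh = 1 := by
      rw [← hUeq, ← hAval]
      exact hsplit
    have hfin : P ((fun ω (i : Fin nh) => c (Sum.inr i) ω) ⁻¹' SS h) ≠ ⊤ := measure_ne_top _ _
    have hreal : (nh : ℝ) * (P ((fun ω (i : Fin nh) => c (Sum.inr i) ω) ⁻¹' SS h)).toReal
        + (1/2 : ℝ) ^ nh = 1 := by
      have hh := congrArg ENNReal.toReal hkey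
      rw [ENNReal.toReal_add (ENNReal.mul_ne_top (ENNReal.natCast_ne_top nh) hfin)
        (ENNReal.pow_ne_top (by norm_num)), ENNReal.toReal_mul, ENNReal.toReal_natCast,
        ENNReal.toReal_pow, ENNReal.toReal_one] at hh
      norm_num at hh ⊢
      exact hh
    rw [hEpre h]
    have hnh' : (0:ℝ) < nh := by exact_mod_cast hnh
    field_simp at hreal ⊢
    linarith
  refine ⟨fun _ => goal1, goal2, fun hsum => ?_⟩
  rw [goal1, goal2 ⟨0, hnh⟩]
  exact stmt4_arith nl nh hnl hnh hsum
end

section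
/- For a ∈ ℝⁿ, ρ ≥ 0, Γ ≥ 0, the value of max{ aᵀζ : ‖ζ‖_∞ ≤ ρ, ‖ζ‖₁ ≤ Γ } equals the strong LP dual min{ Γλ + ρ∑_i μ_i : λ + μ_i ≥ |a_i| ∀i, λ ≥ 0, μ ≥ 0 } (with μ ∈ ℝⁿ); in particular when Γ ≥ nρ the maximum equals ρ‖a‖₁, and when Γ ≤ ρ it equals Γ‖a‖_∞. -/
lemma my_sign_mul (x : ℝ) : x * Real.sign x = |x| := by
  rcases lt_trichotomy x 0 with h | h | h
  · rw [Real.sign_of_neg h, abs_of_neg h]; ring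
  · simp [h]
  · rw [Real.sign_of_pos h, abs_of_pos h]; ring

lemma my_abs_sign (x : ℝ) : |Real.sign x| ≤ 1 := by
  rcases lt_trichotomy x 0 with h | h | h
  · rw [Real.sign_of_neg h]; norm_num
  · simp [h]
  · rw [Real.sign_of_pos h]; norm_num

lemma my_construct (n : ℕ) (a : Fin n → ℝ) (ρ Γ : ℝ) (hρ : 0 ≤ ρ) (hΓ : 0 ≤ Γ) :
    ∃ (ζ : Fin n → ℝ) (lam : ℝ) (μ : Fin n → ℝ),
      (∀ i, |ζ i| ≤ ρ) ∧ (∑ i, |ζ i|) ≤ Γ ∧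
      0 ≤ lam ∧ (∀ i, 0 ≤ μ i) ∧ (∀ i, |a i| ≤ lam + μ i) ∧
      Γ * lam + ρ * ∑ i, μ i ≤ ∑ i, a i * ζ i := by
  rcases eq_or_lt_of_le hρ with hρ0 | hρpos
  · -- ρ = 0
    refine ⟨0, 0, fun i => |a i|, ?_, ?_, le_refl 0, fun i => abs_nonneg _, ?_, ?_⟩
    · intro i; simp [← hρ0]
    · simp [hΓ]
    · intro i; simp
    · simp [← hρ0]
  -- ρ > 0
  set b : Fin n → ℝ := fun i => |a i| with hb
  have hb0 : ∀ i, 0 ≤ b i := fun i => abs_nonneg _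
  set e : Equiv.Perm (Fin n) := Fin.revPerm.trans (Tuple.sort b) with he
  set c : Fin n → ℝ := fun j => b (e j) with hc
  have hcanti : ∀ j j' : Fin n, j ≤ j' → c j' ≤ c j := by
    intro j j' h
    have := Tuple.monotone_sort b (Fin.rev_le_rev.mpr h)
    simpa [hc, he] using this
  have hc0 : ∀ j, 0 ≤ c j := fun j => hb0 _
  set k : ℕ := min n (Nat.floor (Γ/ρ)) with hk
  have hkn : k ≤ n := min_le_left _ _
  have hkρ : (k : ℝ) * ρ ≤ Γ := by
    have h1 : (k : ℝ) ≤ Γ / ρ := by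
      have h2 : (k : ℝ) ≤ (Nat.floor (Γ/ρ) : ℝ) := by
        exact_mod_cast min_le_right n (Nat.floor (Γ/ρ))
      exact h2.trans (Nat.floor_le (div_nonneg hΓ hρ))
    calc (k : ℝ) * ρ ≤ (Γ / ρ) * ρ := by nlinarith
      _ = Γ := by field_simp
  set r : ℝ := Γ - k * ρ with hr
  have hr0 : 0 ≤ r := by simp [hr]; linarith
  have hrρ : k < n → r ≤ ρ := by
    intro h
    have hkf : k = Nat.floor (Γ/ρ) := by omega
    have h2 : Γ / ρ < (k : ℝ) + 1 := by
      rw [hkf]; exact_mod_cast Nat.lt_floor_add_one (Γ/ρ)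
    have : Γ < ((k : ℝ) + 1) * ρ := by
      calc Γ = (Γ / ρ) * ρ := by field_simp
        _ < ((k : ℝ) + 1) * ρ := by nlinarith
    simp [hr]; nlinarith
  set lam : ℝ := if h : k < n then c ⟨k, h⟩ else 0 with hlam
  have hlam0 : 0 ≤ lam := by
    rw [hlam]; split
    · exact hc0 _
    · exact le_refl 0
  set μ : Fin n → ℝ := fun i => max (b i - lam) 0 with hμ
  set y : Fin n → ℝ := fun j => if j.val < k then ρ else if j.val = k then r else 0 with hy
  have hy0 : ∀ j, 0 ≤ y j := by
    intro j; rw [hy]; dsimp only; split_ifs <;> [exact hρ; exact hr0; exact le_refl 0]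
  have hyρ : ∀ j, y j ≤ ρ := by
    intro j; rw [hy]; dsimp only; split_ifs with h1 h2
    · exact le_refl ρ
    · exact hrρ (by omega)
    · exact hρ
  set x : Fin n → ℝ := fun i => y (e.symm i) with hx
  set ζ : Fin n → ℝ := fun i => Real.sign (a i) * x i with hζ
  have hx0 : ∀ i, 0 ≤ x i := fun i => hy0 _
  have hxρ : ∀ i, x i ≤ ρ := fun i => hyρ _
  have habs : ∀ i, |ζ i| ≤ x i := by
    intro i
    rw [hζ]; dsimp only
    rw [abs_mul, abs_of_nonneg (hx0 i)]
    nlinarith [my_abs_sign (a i), abs_nonneg (Real.sign (a i)), hx0 i]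
  -- generic sum computation
  have sum_y : ∀ f : Fin n → ℝ, ∑ j, y j * f j
      = ρ * (∑ j, if j.val < k then f j else 0) + (if h : k < n then r * f ⟨k, h⟩ else 0) := by
    intro f
    have step : ∀ j : Fin n, y j * f j
        = (if j.val < k then ρ * f j else 0) + (if j.val = k then r * f j else 0) := by
      intro j; rw [hy]; dsimp only
      by_cases h1 : (j : ℕ) < k
      · rw [if_pos h1, if_pos h1, if_neg (by omega)]; ring
      · by_cases h2 : (j : ℕ) = k
        · rw [if_neg h1, if_pos h2, if_neg h1, if_pos h2]; ring
        · rw [if_neg h1, if_neg h2, if_neg h1, if_neg h2]; ring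
    rw [Finset.sum_congr rfl (fun j _ => step j), Finset.sum_add_distrib]
    congr 1
    · rw [Finset.mul_sum]
      exact Finset.sum_congr rfl (fun j _ => by split_ifs <;> ring)
    · split_ifs with h
      · have : ∀ j : Fin n, (if j.val = k then r * f j else 0)
            = (if j = ⟨k, h⟩ then r * f j else 0) := by
          intro j; congr 1; simp [Fin.ext_iff]
        rw [Finset.sum_congr rfl (fun j _ => this j)]
        simp
      · have : ∀ j : Fin n, (if j.val = k then r * f j else 0) = 0 := by
          intro j; rw [if_neg]; omega
        simp [this]
  -- sum of x
  have hxsum : ∑ i, x i ≤ Γ := by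
    have h1 : ∑ i, x i = ∑ j, y j :=
      (Fintype.sum_equiv e y x (fun j => by simp [hx])).symm
    have h2 : ∑ j, y j = ∑ j, y j * 1 := by simp
    rw [h1, h2, sum_y]
    have hcard : (∑ j : Fin n, if j.val < k then (1:ℝ) else 0) = k := by
      rw [Fin.sum_univ_eq_sum_range (fun m => if m < k then (1:ℝ) else 0) n]
      rw [← Finset.sum_filter]
      have : (Finset.range n).filter (· < k) = Finset.range k := by
        ext m; simp; omega
      rw [this]; simp
    rw [hcard]
    split_ifs with h
    · simp [hr]; ring_nf; linarith
    · linarith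
  -- primal value
  have hprimal : ∑ i, a i * ζ i
      = ρ * (∑ j, if j.val < k then c j else 0) + (if h : k < n then r * c ⟨k, h⟩ else 0) := by
    have h1 : ∀ i, a i * ζ i = b i * x i := by
      intro i; rw [hζ, hb]; dsimp only; rw [← my_sign_mul (a i)]; ring
    rw [Finset.sum_congr rfl (fun i _ => h1 i)]
    have h2 : ∑ i, b i * x i = ∑ j, y j * c j := by
      refine (Fintype.sum_equiv e (fun j => y j * c j) (fun i => b i * x i) (fun j => ?_)).symm
      rw [hx, hc]; dsimp only; rw [Equiv.symm_apply_apply]; ring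
    rw [h2]; exact sum_y c
  -- dual value
  have hμsum : ∑ i, μ i = ∑ j, max (c j - lam) 0 :=
    (Fintype.sum_equiv e (fun j => max (c j - lam) 0) μ (fun j => by simp [hμ, hc])).symm
  refine ⟨ζ, lam, μ, fun i => (habs i).trans (hxρ i), ?_, hlam0, fun i => le_max_right _ _, ?_, ?_⟩
  · calc ∑ i, |ζ i| ≤ ∑ i, x i := Finset.sum_le_sum (fun i _ => habs i)
      _ ≤ Γ := hxsum
  · intro i; rw [hμ]; dsimp only
    rcases le_or_gt (b i - lam) 0 with h | h
    · rw [max_eq_right h]; simp [hb] at h ⊢; linarith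
    · rw [max_eq_left h.le]; simp [hb]
  · rw [hprimal, hμsum]
    by_cases h : k < n
    · have hlamval : lam = c ⟨k, h⟩ := by rw [hlam, dif_pos h]
      have hmax : ∀ j : Fin n, max (c j - lam) 0 = if j.val < k then c j - lam else 0 := by
        intro j
        split_ifs with hj
        · refine max_eq_left (sub_nonneg.mpr ?_)
          rw [hlamval]
          exact hcanti j ⟨k, h⟩ (by simp [Fin.le_def]; omega)
        · refine max_eq_right (sub_nonpos.mpr ?_)
          rw [hlamval]
          exact hcanti ⟨k, h⟩ j (by simp [Fin.le_def]; omega)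
      rw [Finset.sum_congr rfl (fun j _ => hmax j)]
      have hsplit : (∑ j : Fin n, if j.val < k then c j - lam else 0)
          = (∑ j : Fin n, if j.val < k then c j else 0) - k * lam := by
        have : ∀ j : Fin n, (if j.val < k then c j - lam else 0)
            = (if j.val < k then c j else 0) - (if j.val < k then lam else 0) := by
          intro j; split_ifs <;> ring
        rw [Finset.sum_congr rfl (fun j _ => this j), Finset.sum_sub_distrib]
        congr 1
        rw [Fin.sum_univ_eq_sum_range (fun m => if m < k then lam else 0) n]
        rw [← Finset.sum_filter]
        have : (Finset.range n).filter (· < k) = Finset.range k := by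
          ext m; simp; omega
        rw [this, Finset.sum_const, Finset.card_range, nsmul_eq_mul]
      rw [hsplit, dif_pos h, ← hlamval]
      simp [hr]; ring_nf; exact le_refl _
    · have hlamval : lam = 0 := by rw [hlam, dif_neg h]
      have hmax : ∀ j : Fin n, max (c j - lam) 0 = c j := by
        intro j; rw [hlamval, sub_zero]; exact max_eq_left (hc0 j)
      have hall : ∀ j : Fin n, (if j.val < k then c j else 0) = c j := by
        intro j; rw [if_pos]; omega
      rw [Finset.sum_congr rfl (fun j _ => hmax j), Finset.sum_congr rfl (fun j _ => hall j),
        hlamval, dif_neg h]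
      ring_nf; exact le_refl _

/-- Strong LP duality for the budget-uncertainty inner maximization:
`max{ aᵀζ : ‖ζ‖_∞ ≤ ρ, ‖ζ‖₁ ≤ Γ }
  = min{ Γλ + ρ∑_i μ_i : λ + μ_i ≥ |a_i| ∀i, λ ≥ 0, μ ≥ 0 }`,
and in particular when `Γ ≥ nρ` the maximum equals `ρ‖a‖₁`, and when `Γ ≤ ρ` it
equals `Γ‖a‖_∞`. -/
theorem stmt_15 (n : ℕ) (a : Fin n → ℝ) (ρ Γ : ℝ) (hρ : 0 ≤ ρ) (hΓ : 0 ≤ Γ)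
    (S : Set ℝ)
    (hS : S = {s | ∃ ζ : Fin n → ℝ,
      (∀ i, |ζ i| ≤ ρ) ∧ (∑ i, |ζ i|) ≤ Γ ∧ s = ∑ i, a i * ζ i})
    (T : Set ℝ)
    (hT : T = {t | ∃ (lam : ℝ) (μ : Fin n → ℝ),
      0 ≤ lam ∧ (∀ i, 0 ≤ μ i) ∧ (∀ i, |a i| ≤ lam + μ i) ∧
      t = Γ * lam + ρ * ∑ i, μ i}) :
    sSup S = sInf T ∧
    ((n : ℝ) * ρ ≤ Γ → sSup S = ρ * ∑ i, |a i|) ∧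
    (Γ ≤ ρ → sSup S = Γ * ⨆ i, |a i|) := by
  subst hS hT
  have hSne : (∃ s, s ∈ {s | ∃ ζ : Fin n → ℝ,
      (∀ i, |ζ i| ≤ ρ) ∧ (∑ i, |ζ i|) ≤ Γ ∧ s = ∑ i, a i * ζ i}) :=
    ⟨0, 0, fun i => by simpa using hρ, by simpa using hΓ, by simp⟩
  have weak : ∀ s ∈ {s | ∃ ζ : Fin n → ℝ,
      (∀ i, |ζ i| ≤ ρ) ∧ (∑ i, |ζ i|) ≤ Γ ∧ s = ∑ i, a i * ζ i},
      ∀ t ∈ {t | ∃ (lam : ℝ) (μ : Fin n → ℝ),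
      0 ≤ lam ∧ (∀ i, 0 ≤ μ i) ∧ (∀ i, |a i| ≤ lam + μ i) ∧
      t = Γ * lam + ρ * ∑ i, μ i}, s ≤ t := by
    rintro s ⟨ζ, hζρ, hζΓ, rfl⟩ t ⟨lam, μ, hlam, hμ0, hfeas, rfl⟩
    calc ∑ i, a i * ζ i ≤ ∑ i, (lam + μ i) * |ζ i| := by
          refine Finset.sum_le_sum (fun i _ => ?_)
          calc a i * ζ i ≤ |a i * ζ i| := le_abs_self _
            _ = |a i| * |ζ i| := abs_mul _ _
            _ ≤ (lam + μ i) * |ζ i| :=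
                mul_le_mul_of_nonneg_right (hfeas i) (abs_nonneg _)
      _ = lam * ∑ i, |ζ i| + ∑ i, μ i * |ζ i| := by
          rw [Finset.mul_sum, ← Finset.sum_add_distrib]
          exact Finset.sum_congr rfl (fun i _ => by ring)
      _ ≤ lam * Γ + ∑ i, μ i * ρ := by
          gcongr with i
          · exact hμ0 i
          · exact hζρ i
      _ = Γ * lam + ρ * ∑ i, μ i := by rw [← Finset.sum_mul]; ring
  obtain ⟨ζ₀, lam₀, μ₀, h1, h2, h3, h4, h5, h6⟩ := my_construct n a ρ Γ hρ hΓ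
  have hsmem : (∑ i, a i * ζ₀ i) ∈ {s | ∃ ζ : Fin n → ℝ,
      (∀ i, |ζ i| ≤ ρ) ∧ (∑ i, |ζ i|) ≤ Γ ∧ s = ∑ i, a i * ζ i} := ⟨ζ₀, h1, h2, rfl⟩
  have htmem : (Γ * lam₀ + ρ * ∑ i, μ₀ i) ∈ {t | ∃ (lam : ℝ) (μ : Fin n → ℝ),
      0 ≤ lam ∧ (∀ i, 0 ≤ μ i) ∧ (∀ i, |a i| ≤ lam + μ i) ∧
      t = Γ * lam + ρ * ∑ i, μ i} := ⟨lam₀, μ₀, h3, h4, h5, rfl⟩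
  have hTne : Set.Nonempty {t | ∃ (lam : ℝ) (μ : Fin n → ℝ),
      0 ≤ lam ∧ (∀ i, 0 ≤ μ i) ∧ (∀ i, |a i| ≤ lam + μ i) ∧
      t = Γ * lam + ρ * ∑ i, μ i} := ⟨_, htmem⟩
  have hSbdd : BddAbove {s | ∃ ζ : Fin n → ℝ,
      (∀ i, |ζ i| ≤ ρ) ∧ (∑ i, |ζ i|) ≤ Γ ∧ s = ∑ i, a i * ζ i} :=
    ⟨_, fun s hs => weak s hs _ htmem⟩
  have hTbdd : BddBelow {t | ∃ (lam : ℝ) (μ : Fin n → ℝ),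
      0 ≤ lam ∧ (∀ i, 0 ≤ μ i) ∧ (∀ i, |a i| ≤ lam + μ i) ∧
      t = Γ * lam + ρ * ∑ i, μ i} := by
    obtain ⟨s₀, hs₀⟩ := hSne
    exact ⟨s₀, fun t ht => weak s₀ hs₀ t ht⟩
  refine ⟨?_, ?_, ?_⟩
  · refine le_antisymm ?_ ?_
    · exact csSup_le hSne (fun s hs => le_csInf hTne (fun t ht => weak s hs t ht))
    · calc sInf _ ≤ Γ * lam₀ + ρ * ∑ i, μ₀ i := csInf_le hTbdd htmem
        _ ≤ ∑ i, a i * ζ₀ i := h6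
        _ ≤ sSup _ := le_csSup hSbdd hsmem
  · intro hnρ
    refine le_antisymm (csSup_le hSne ?_) (le_csSup hSbdd ?_)
    · rintro s ⟨ζ, hζρ, hζΓ, rfl⟩
      calc ∑ i, a i * ζ i ≤ ∑ i, |a i| * ρ := by
            refine Finset.sum_le_sum (fun i _ => ?_)
            calc a i * ζ i ≤ |a i * ζ i| := le_abs_self _
              _ = |a i| * |ζ i| := abs_mul _ _
              _ ≤ |a i| * ρ := mul_le_mul_of_nonneg_left (hζρ i) (abs_nonneg _)
        _ = ρ * ∑ i, |a i| := by rw [← Finset.sum_mul]; ring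
    · refine ⟨fun i => Real.sign (a i) * ρ, fun i => ?_, ?_, ?_⟩
      · rw [abs_mul, abs_of_nonneg hρ]
        nlinarith [my_abs_sign (a i), abs_nonneg (Real.sign (a i))]
      · calc ∑ i, |Real.sign (a i) * ρ| ≤ ∑ _i : Fin n, ρ := by
              refine Finset.sum_le_sum (fun i _ => ?_)
              rw [abs_mul, abs_of_nonneg hρ]
              nlinarith [my_abs_sign (a i), abs_nonneg (Real.sign (a i))]
          _ = (n : ℝ) * ρ := by simp [mul_comm]
          _ ≤ Γ := hnρ
      · rw [Finset.mul_sum]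
        refine Finset.sum_congr rfl (fun i _ => ?_)
        rw [← my_sign_mul (a i)]; ring
  · intro hΓρ
    rcases Nat.eq_zero_or_pos n with hn | hn
    · subst hn
      have hS0 : sSup {s | ∃ ζ : Fin 0 → ℝ,
          (∀ i, |ζ i| ≤ ρ) ∧ (∑ i, |ζ i|) ≤ Γ ∧ s = ∑ i, a i * ζ i} = 0 := by
        refine le_antisymm (csSup_le hSne ?_) (le_csSup hSbdd ?_)
        · rintro s ⟨ζ, _, _, rfl⟩; simp
        · exact ⟨0, fun i => i.elim0, by simpa using hΓ, by simp⟩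
      rw [hS0, Real.iSup_of_isEmpty, mul_zero]
    · have : Nonempty (Fin n) := ⟨⟨0, hn⟩⟩
      obtain ⟨i0, hi0⟩ := Finite.exists_max (fun i => |a i|)
      have hM : (⨆ i, |a i|) = |a i0| :=
        le_antisymm (ciSup_le hi0) (le_ciSup (f := fun i => |a i|) (Set.Finite.bddAbove (Set.finite_range _)) i0)
      refine le_antisymm (csSup_le hSne ?_) (le_csSup hSbdd ?_)
      · rintro s ⟨ζ, hζρ, hζΓ, rfl⟩
        rw [hM]
        calc ∑ i, a i * ζ i ≤ ∑ i, |a i0| * |ζ i| := by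
              refine Finset.sum_le_sum (fun i _ => ?_)
              calc a i * ζ i ≤ |a i * ζ i| := le_abs_self _
                _ = |a i| * |ζ i| := abs_mul _ _
                _ ≤ |a i0| * |ζ i| := mul_le_mul_of_nonneg_right (hi0 i) (abs_nonneg _)
          _ = |a i0| * ∑ i, |ζ i| := by rw [Finset.mul_sum]
          _ ≤ |a i0| * Γ := mul_le_mul_of_nonneg_left hζΓ (abs_nonneg _)
          _ = Γ * |a i0| := mul_comm _ _
      · rw [hM]
        refine ⟨fun i => if i = i0 then Real.sign (a i0) * Γ else 0, fun i => ?_, ?_, ?_⟩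
        · dsimp only; split_ifs with h
          · rw [abs_mul, abs_of_nonneg hΓ]
            nlinarith [my_abs_sign (a i0), abs_nonneg (Real.sign (a i0))]
          · simpa using hρ
        · dsimp only
          have : ∀ i : Fin n, |if i = i0 then Real.sign (a i0) * Γ else 0|
              = if i = i0 then |Real.sign (a i0) * Γ| else 0 := by
            intro i; split_ifs <;> simp
          rw [Finset.sum_congr rfl (fun i _ => this i), Finset.sum_ite_eq' Finset.univ i0]
          simp only [Finset.mem_univ, if_true]
          rw [abs_mul, abs_of_nonneg hΓ]
          nlinarith [my_abs_sign (a i0), abs_nonneg (Real.sign (a i0))]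
        · dsimp only
          have : ∀ i : Fin n, a i * (if i = i0 then Real.sign (a i0) * Γ else 0)
              = if i = i0 then a i0 * Real.sign (a i0) * Γ else 0 := by
            intro i; split_ifs with h
            · subst h; ring
            · ring
          rw [Finset.sum_congr rfl (fun i _ => this i), Finset.sum_ite_eq' Finset.univ i0]
          simp only [Finset.mem_univ, if_true]
          rw [my_sign_mul (a i0)]; ring
end
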